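/- The bound β = √2·C is attained: for each C ∈ [0,1] there exists a two-qubit density matrix ρ with concurrence C(ρ) = C and maximal CHSH expectation β(ρ) = max[1, √2·C]. An example is a suitable convex combination of a maximally entangled pure state and an orthogonal separable pure state. -/

import Mathlib

open Matrix Kronecker BigOperators ComplexOrder

noncomputable section

/-- The Pauli matrices σ₁ (x), σ₂ (y), σ₃ (z), indexed by `Fin 3`. -/
def pauli : Fin 3 → Matrix (Fin 2) (Fin 2) ℂ
  | 0 => !![0, 1; 1, 0]
  | 1 => !![0, -Complex.I; Complex.I, 0]
  | 2 => !![1, 0; 0, -1]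

/-- A unit vector in ℝ³. -/
def unitVec (v : Fin 3 → ℝ) : Prop := ∑ i, v i ^ 2 = 1

/-- The CHSH Bell operator associated to measurement directions a, b, c, d. -/
def bellOp (a b c d : Fin 3 → ℝ) : Matrix (Fin 2 × Fin 2) (Fin 2 × Fin 2) ℂ :=
  (1 / 2 : ℂ) • ∑ i, ∑ j,
    ((a i * (c j + d j) + b i * (c j - d j) : ℝ) : ℂ) • (pauli i ⊗ₖ pauli j)

/-- The set of CHSH expectation values of a two-qubit state. -/
def betaSet (ρ : Matrix (Fin 2 × Fin 2) (Fin 2 × Fin 2) ℂ) : Set ℝ :=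
  {t : ℝ | ∃ a b c d : Fin 3 → ℝ, unitVec a ∧ unitVec b ∧ unitVec c ∧ unitVec d ∧
    t = (Matrix.trace (ρ * bellOp a b c d)).re}

/-- The correlation matrix R_{kl} = tr(ρ σ_k ⊗ σ_l). -/
def corr (ρ : Matrix (Fin 2 × Fin 2) (Fin 2 × Fin 2) ℂ) : Matrix (Fin 3) (Fin 3) ℝ :=
  Matrix.of fun k l => (Matrix.trace (ρ * (pauli k ⊗ₖ pauli l))).re

/-- The four Bell states. -/
def bell : Fin 4 → (Fin 2 × Fin 2) → ℂ
  | 0 => fun p => if p = (0, 0) then (Real.sqrt 2 : ℂ)⁻¹ else if p = (1, 1) then (Real.sqrt 2 : ℂ)⁻¹ else 0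
  | 1 => fun p => if p = (0, 0) then (Real.sqrt 2 : ℂ)⁻¹ else if p = (1, 1) then -(Real.sqrt 2 : ℂ)⁻¹ else 0
  | 2 => fun p => if p = (0, 1) then (Real.sqrt 2 : ℂ)⁻¹ else if p = (1, 0) then (Real.sqrt 2 : ℂ)⁻¹ else 0
  | 3 => fun p => if p = (0, 1) then (Real.sqrt 2 : ℂ)⁻¹ else if p = (1, 0) then -(Real.sqrt 2 : ℂ)⁻¹ else 0

/-- Projector onto the i-th Bell state. -/
def bellProj (i : Fin 4) : Matrix (Fin 2 × Fin 2) (Fin 2 × Fin 2) ℂ :=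
  Matrix.vecMulVec (bell i) (star (bell i))

/-! ### Auxiliary constructions for the proof -/

/-- The example state: an X-shaped two-qubit density matrix. -/
def rhoM (A B Z : ℝ) : Matrix (Fin 2 × Fin 2) (Fin 2 × Fin 2) ℂ :=
  Matrix.of fun p q =>
    ![![ ![![(A:ℂ), 0], ![0, (B:ℂ)]],
         ![![0, (Z:ℂ)], ![0, 0]] ],
       ![ ![![0,0],![0,0]],
          ![![(B:ℂ),0],![0,(A:ℂ)]] ] ] p.1 p.2 q.1 q.2

def m4 (e : Fin 2 → Fin 2 → Fin 2 → Fin 2 → ℂ) : Matrix (Fin 2 × Fin 2) (Fin 2 × Fin 2) ℂ :=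
  Matrix.of fun p q => e p.1 p.2 q.1 q.2

def corrv (A B Z : ℝ) : Fin 3 → Fin 3 → ℂ :=
  fun i j => ![![((2*B:ℝ):ℂ), 0, 0], ![0, ((-(2*B):ℝ):ℂ), 0], ![0, 0, ((2*A-Z:ℝ):ℂ)]] i j

lemma corr_rhoM (A B Z : ℝ) (i j : Fin 3) :
    Matrix.trace (rhoM A B Z * (pauli i ⊗ₖ pauli j)) = corrv A B Z i j := by
  fin_cases i <;> fin_cases j <;>
    simp [rhoM, pauli, corrv, Matrix.trace, Matrix.mul_apply,
      Matrix.kroneckerMap_apply, Fintype.sum_prod_type, Fin.sum_univ_two,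
      Matrix.vecHead, Matrix.vecTail] <;>
    push_cast <;> ring

lemma rhoM_trace (A B Z : ℝ) : (rhoM A B Z).trace = ((2*A + Z : ℝ) : ℂ) := by
  simp [rhoM, Matrix.trace, Fintype.sum_prod_type, Fin.sum_univ_two]
  push_cast; ring

lemma trace_bell (A B Z : ℝ) (a b c d : Fin 3 → ℝ) :
    (Matrix.trace (rhoM A B Z * bellOp a b c d)).re =
      1/2 * ((a 0 * (c 0 + d 0) + b 0 * (c 0 - d 0)) * (2*B)
           - (a 1 * (c 1 + d 1) + b 1 * (c 1 - d 1)) * (2*B)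
           + (a 2 * (c 2 + d 2) + b 2 * (c 2 - d 2)) * (2*A - Z)) := by
  have h : Matrix.trace (rhoM A B Z * bellOp a b c d) =
      (1/2 : ℂ) * ∑ i, ∑ j, ((a i * (c j + d j) + b i * (c j - d j) : ℝ) : ℂ) * corrv A B Z i j := by
    rw [bellOp, Matrix.mul_smul, Matrix.trace_smul]
    congr 1
    rw [Matrix.mul_sum, Matrix.trace_sum]
    refine Finset.sum_congr rfl fun i _ => ?_
    rw [Matrix.mul_sum, Matrix.trace_sum]
    refine Finset.sum_congr rfl fun j _ => ?_
    rw [Matrix.mul_smul, Matrix.trace_smul, corr_rhoM, smul_eq_mul]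
  rw [h]
  simp [corrv, Fin.sum_univ_three, Matrix.vecHead, Matrix.vecTail, Complex.mul_re]
  ring

lemma rhoM_posSemidef (A B Z : ℝ) (hB : 0 ≤ B) (hBA : B ≤ A) (hZ : 0 ≤ Z) :
    (rhoM A B Z).PosSemidef := by
  rw [Matrix.posSemidef_iff_dotProduct_mulVec]
  constructor
  · ext p q
    obtain ⟨i, j⟩ := p; obtain ⟨k, l⟩ := q
    fin_cases i <;> fin_cases j <;> fin_cases k <;> fin_cases l <;>
      simp [rhoM, Matrix.conjTranspose_apply, Matrix.vecHead, Matrix.vecTail]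
  · intro x
    have hexp : star x ⬝ᵥ (rhoM A B Z).mulVec x =
        (((A * (Complex.normSq (x (0,0)) + Complex.normSq (x (1,1)))
          + Z * Complex.normSq (x (0,1))
          + 2 * B * ((starRingEnd ℂ (x (0,0)) * x (1,1)).re) : ℝ)) : ℂ) := by
      simp only [dotProduct, Matrix.mulVec, rhoM, Fintype.sum_prod_type, Fin.sum_univ_two,
        Matrix.of_apply, Matrix.cons_val_zero, Matrix.cons_val_one, Matrix.head_cons,
        Pi.star_apply]
      rw [Complex.ext_iff]
      constructor <;>
        simp [Complex.normSq_apply, Complex.mul_re, Complex.mul_im] <;> ring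
    rw [hexp]
    have h1 : (starRingEnd ℂ (x (0,0)) * x (1,1)).re ≥
        -(‖x (0,0)‖ * ‖x (1,1)‖) := by
      have h := Complex.abs_re_le_norm (starRingEnd ℂ (x (0,0)) * x (1,1))
      rw [norm_mul, Complex.norm_conj] at h
      have h' := neg_abs_le ((starRingEnd ℂ (x (0,0)) * x (1,1)).re)
      linarith
    have h2 : (0:ℝ) ≤ A * (Complex.normSq (x (0,0)) + Complex.normSq (x (1,1)))
          + Z * Complex.normSq (x (0,1))
          + 2 * B * ((starRingEnd ℂ (x (0,0)) * x (1,1)).re) := by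
      have e1 := Complex.sq_norm (x (0,0))
      have e2 := Complex.sq_norm (x (1,1))
      have e3 := Complex.sq_norm (x (0,1))
      nlinarith [sq_nonneg (‖x (0,0)‖ - ‖x (1,1)‖),
        norm_nonneg (x (0,0)), norm_nonneg (x (1,1)),
        norm_nonneg (x (0,1)), sq_nonneg (‖x (0,1)‖)]
    exact_mod_cast Complex.zero_le_real.mpr h2

lemma rhoM_transpose (A B Z : ℝ) : (rhoM A B Z)ᵀ = rhoM A B Z := by
  ext p q
  obtain ⟨i, j⟩ := p; obtain ⟨k, l⟩ := q
  fin_cases i <;> fin_cases j <;> fin_cases k <;> fin_cases l <;>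
    simp [rhoM, Matrix.transpose_apply]

lemma step1 (A B Z : ℝ) : rhoM A B Z * (pauli 1 ⊗ₖ pauli 1) =
    m4 ![![ ![![(-B:ℂ),0],![0,(-A:ℂ)]], ![![0,0],![(Z:ℂ),0]] ],
        ![ ![![0,0],![0,0]], ![![(-A:ℂ),0],![0,(-B:ℂ)]] ]] := by
  ext p q
  obtain ⟨i, j⟩ := p; obtain ⟨k, l⟩ := q
  fin_cases i <;> fin_cases j <;> fin_cases k <;> fin_cases l <;>
    simp [rhoM, m4, pauli, Matrix.mul_apply, Matrix.kroneckerMap_apply,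
      Fintype.sum_prod_type, Fin.sum_univ_two, Matrix.vecHead, Matrix.vecTail]

lemma step2 (A B Z : ℝ) :
    m4 ![![ ![![(-B:ℂ),0],![0,(-A:ℂ)]], ![![0,0],![(Z:ℂ),0]] ],
        ![ ![![0,0],![0,0]], ![![(-A:ℂ),0],![0,(-B:ℂ)]] ]] * rhoM A B Z =
    m4 ![![ ![![(-2*A*B:ℂ),0],![0,(-(A^2+B^2):ℂ)]], ![![0,0],![0,0]] ],
        ![ ![![0,0],![0,0]], ![![(-(A^2+B^2):ℂ),0],![0,(-2*A*B:ℂ)]] ]] := by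
  ext p q
  obtain ⟨i, j⟩ := p; obtain ⟨k, l⟩ := q
  fin_cases i <;> fin_cases j <;> fin_cases k <;> fin_cases l <;>
    (simp [rhoM, m4, Matrix.mul_apply, Fintype.sum_prod_type, Fin.sum_univ_two,
      Matrix.vecHead, Matrix.vecTail]; try ring)

lemma step3 (A B : ℝ) :
    m4 ![![ ![![(-2*A*B:ℂ),0],![0,(-(A^2+B^2):ℂ)]], ![![0,0],![0,0]] ],
        ![ ![![0,0],![0,0]], ![![(-(A^2+B^2):ℂ),0],![0,(-2*A*B:ℂ)]] ]] * (pauli 1 ⊗ₖ pauli 1) =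
    m4 ![![ ![![((A^2+B^2:ℝ):ℂ),0],![0,((2*A*B:ℝ):ℂ)]], ![![0,0],![0,0]] ],
        ![ ![![0,0],![0,0]], ![![((2*A*B:ℝ):ℂ),0],![0,((A^2+B^2:ℝ):ℂ)]] ]] := by
  ext p q
  obtain ⟨i, j⟩ := p; obtain ⟨k, l⟩ := q
  fin_cases i <;> fin_cases j <;> fin_cases k <;> fin_cases l <;>
    (simp [m4, pauli, Matrix.mul_apply, Matrix.kroneckerMap_apply,
      Fintype.sum_prod_type, Fin.sum_univ_two, Matrix.vecHead, Matrix.vecTail] <;>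
      push_cast <;> ring)

lemma charpoly_m4 (P Q : ℂ) :
    (m4 ![![ ![![P,0],![0,Q]], ![![0,0],![0,0]] ],
         ![ ![![0,0],![0,0]], ![![Q,0],![0,P]] ]]).charpoly =
    (Polynomial.X - Polynomial.C (P+Q)) * (Polynomial.X - Polynomial.C (P-Q)) *
      Polynomial.X * Polynomial.X := by
  have h := Matrix.charpoly_reindex (finProdFinEquiv : Fin 2 × Fin 2 ≃ Fin 4)
    (m4 ![![ ![![P,0],![0,Q]], ![![0,0],![0,0]] ],
         ![ ![![0,0],![0,0]], ![![Q,0],![0,P]] ]])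
  rw [← h]
  have h2 : (Matrix.reindex finProdFinEquiv finProdFinEquiv)
      (m4 ![![ ![![P,0],![0,Q]], ![![0,0],![0,0]] ],
           ![ ![![0,0],![0,0]], ![![Q,0],![0,P]] ]]) =
      !![P,0,0,Q; 0,0,0,0; 0,0,0,0; Q,0,0,P] := by
    ext i j
    fin_cases i <;> fin_cases j <;>
      simp [m4, Matrix.reindex_apply, Matrix.submatrix_apply] <;>
      rfl
  rw [h2]
  have h3 : Matrix.charmatrix (!![P,0,0,Q; 0,0,0,0; 0,0,0,0; Q,0,0,P]) =
      !![Polynomial.X - Polynomial.C P, 0, 0, -Polynomial.C Q;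
         0, Polynomial.X, 0, 0;
         0, 0, Polynomial.X, 0;
         -Polynomial.C Q, 0, 0, Polynomial.X - Polynomial.C P] := by
    ext i j
    fin_cases i <;> fin_cases j <;>
      simp [Matrix.charmatrix_apply_eq, Matrix.charmatrix_apply_ne,
        Matrix.vecHead, Matrix.vecTail]
  rw [Matrix.charpoly, h3]
  rw [Matrix.det_succ_row_zero]
  simp [Fin.sum_univ_succ, Matrix.det_fin_three, Fin.succAbove]
  ring

lemma charpoly_rho (A B Z : ℝ) :
    (rhoM A B Z * (pauli 1 ⊗ₖ pauli 1) * (rhoM A B Z)ᵀ * (pauli 1 ⊗ₖ pauli 1)).charpoly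
    = (Polynomial.X - Polynomial.C (((A+B)^2 : ℝ) : ℂ))
      * (Polynomial.X - Polynomial.C (((A-B)^2 : ℝ) : ℂ))
      * Polynomial.X * Polynomial.X := by
  rw [rhoM_transpose, step1, step2, step3, charpoly_m4]
  have e1 : ((A^2+B^2:ℝ):ℂ) + ((2*A*B:ℝ):ℂ) = (((A+B)^2:ℝ):ℂ) := by push_cast; ring
  have e2 : ((A^2+B^2:ℝ):ℂ) - ((2*A*B:ℝ):ℂ) = (((A-B)^2:ℝ):ℂ) := by push_cast; ring
  rw [e1, e2]

/-! ### Analytic lemmas -/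

lemma sqrt_le_of_sq (x y : ℝ) (hy : 0 ≤ y) (h : x ≤ y^2) : Real.sqrt x ≤ y := by
  calc Real.sqrt x ≤ Real.sqrt (y^2) := Real.sqrt_le_sqrt h
  _ = y := Real.sqrt_sq hy

lemma cs3 (a0 a1 a2 w0 w1 w2 : ℝ) (h : a0^2+a1^2+a2^2 = 1) :
    a0*w0+a1*w1+a2*w2 ≤ Real.sqrt (w0^2+w1^2+w2^2) := by
  have h2 : (a0*w0+a1*w1+a2*w2)^2 ≤ w0^2+w1^2+w2^2 := by
    nlinarith [sq_nonneg (a0*w1-a1*w0), sq_nonneg (a0*w2-a2*w0), sq_nonneg (a1*w2-a2*w1),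
      sq_nonneg w0, sq_nonneg w1, sq_nonneg w2]
  have h3 := Real.sqrt_le_sqrt h2
  rw [Real.sqrt_sq_eq_abs] at h3
  exact le_trans (le_abs_self _) h3

lemma div_bound_abs (u t m X2 Y2 a2 b2 : ℝ) (hXp : 0 < X2) (hYp : 0 < Y2)
    (hm2 : m^2 = t^2+u^2) (ht2u2 : 0 ≤ t^2-u^2) (bessel : a2*Y2 + b2*X2 ≤ X2*Y2) :
    (u^2*X2 + (t^2-u^2)*a2)/X2 + (u^2*Y2+(t^2-u^2)*b2)/Y2 ≤ m^2 := by
  rw [div_add_div _ _ (ne_of_gt hXp) (ne_of_gt hYp), div_le_iff₀ (by positivity), hm2]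
  linarith [mul_nonneg ht2u2 (sub_nonneg.mpr bessel)]

lemma cauchy_combine (p q g h m : ℝ) (hp4 : p^2+q^2 = 4) (hgh : g^2+h^2 ≤ m^2)
    (hpn : 0 ≤ p) (hqn : 0 ≤ q) (hgn : 0 ≤ g) (hhn : 0 ≤ h) (hm : 0 ≤ m) :
    p*g + q*h ≤ 2*m := by
  have e6 : (p*g+q*h)^2 + (p*h-q*g)^2 = (p^2+q^2)*(g^2+h^2) := by ring
  rw [hp4] at e6
  have e7 : (p*g+q*h)^2 ≤ 4*m^2 := by nlinarith [sq_nonneg (p*h-q*g)]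
  nlinarith [mul_nonneg hpn hgn, mul_nonneg hqn hhn]

lemma deg_bound (u t m r b2 : ℝ) (hsum : r + b2 = 4) (hr : 0 ≤ r) (hb2 : 0 ≤ b2)
    (ht2u2 : 0 ≤ t^2-u^2) (hm2 : m^2 = t^2+u^2) :
    u^2*r + t^2*b2 ≤ (2*m)^2 := by nlinarith [mul_nonneg ht2u2 hr, sq_nonneg u]

set_option maxHeartbeats 1000000 in
lemma sum_sqrt_le (u t m x0 x1 x2 y0 y1 y2 : ℝ)
    (hu : 0 ≤ u) (hut : u ≤ t) (hm : 0 ≤ m) (hm2 : m^2 = t^2 + u^2)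
    (horth : x0*y0 + x1*y1 + x2*y2 = 0)
    (hsum : (x0^2+x1^2+x2^2) + (y0^2+y1^2+y2^2) = 4) :
    Real.sqrt (u^2*x0^2 + u^2*x1^2 + t^2*x2^2) +
    Real.sqrt (u^2*y0^2 + u^2*y1^2 + t^2*y2^2) ≤ 2*m := by
  have ht0 : 0 ≤ t := le_trans hu hut
  have htm : t ≤ m := by nlinarith
  have hXnn : (0:ℝ) ≤ x0^2+x1^2+x2^2 := by positivity
  have hYnn : (0:ℝ) ≤ y0^2+y1^2+y2^2 := by positivity
  have hAnn : (0:ℝ) ≤ u^2*x0^2 + u^2*x1^2 + t^2*x2^2 := by positivity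
  have hBnn : (0:ℝ) ≤ u^2*y0^2 + u^2*y1^2 + t^2*y2^2 := by positivity
  have e2 : (x0*y0+x1*y1)^2 = (x2*y2)^2 := by
    have e : x0*y0+x1*y1 = -(x2*y2) := by linarith
    rw [e]; ring
  have bessel : x2^2*(y0^2+y1^2+y2^2) + y2^2*(x0^2+x1^2+x2^2) ≤
      (x0^2+x1^2+x2^2)*(y0^2+y1^2+y2^2) := by
    have hid : (x0^2+x1^2+x2^2)*(y0^2+y1^2+y2^2) - x2^2*(y0^2+y1^2+y2^2)
        - y2^2*(x0^2+x1^2+x2^2) = (x0*y1-x1*y0)^2 := by linear_combination e2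
    nlinarith [sq_nonneg (x0*y1-x1*y0)]
  have ht2u2 : 0 ≤ t^2 - u^2 := by nlinarith
  by_cases hX : x0^2+x1^2+x2^2 = 0
  · have hx0 : x0^2 = 0 := by linarith [sq_nonneg x0, sq_nonneg x1, sq_nonneg x2]
    have hx1 : x1^2 = 0 := by linarith [sq_nonneg x0, sq_nonneg x1, sq_nonneg x2]
    have hx2 : x2^2 = 0 := by linarith [sq_nonneg x0, sq_nonneg x1, sq_nonneg x2]
    have h1 : Real.sqrt (u^2*x0^2 + u^2*x1^2 + t^2*x2^2) ≤ 0 := by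
      apply sqrt_le_of_sq _ _ le_rfl
      rw [hx0, hx1, hx2]; norm_num
    have h2 : Real.sqrt (u^2*y0^2 + u^2*y1^2 + t^2*y2^2) ≤ 2*m := by
      apply sqrt_le_of_sq _ _ (by linarith)
      have e : u^2*y0^2 + u^2*y1^2 + t^2*y2^2 = u^2*(y0^2+y1^2) + t^2*(y2^2) := by ring
      rw [e]
      exact deg_bound u t m _ _ (by linarith) (by positivity) (by positivity) ht2u2 hm2
    linarith
  · by_cases hY : y0^2+y1^2+y2^2 = 0
    · have hx0 : y0^2 = 0 := by linarith [sq_nonneg y0, sq_nonneg y1, sq_nonneg y2]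
      have hx1 : y1^2 = 0 := by linarith [sq_nonneg y0, sq_nonneg y1, sq_nonneg y2]
      have hx2 : y2^2 = 0 := by linarith [sq_nonneg y0, sq_nonneg y1, sq_nonneg y2]
      have h1 : Real.sqrt (u^2*y0^2 + u^2*y1^2 + t^2*y2^2) ≤ 0 := by
        apply sqrt_le_of_sq _ _ le_rfl
        rw [hx0, hx1, hx2]; norm_num
      have h2 : Real.sqrt (u^2*x0^2 + u^2*x1^2 + t^2*x2^2) ≤ 2*m := by
        apply sqrt_le_of_sq _ _ (by linarith)
        have e : u^2*x0^2 + u^2*x1^2 + t^2*x2^2 = u^2*(x0^2+x1^2) + t^2*(x2^2) := by ring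
        rw [e]
        exact deg_bound u t m _ _ (by linarith) (by positivity) (by positivity) ht2u2 hm2
      linarith
    · have hXp : 0 < x0^2+x1^2+x2^2 := lt_of_le_of_ne hXnn (Ne.symm hX)
      have hYp : 0 < y0^2+y1^2+y2^2 := lt_of_le_of_ne hYnn (Ne.symm hY)
      have hdiv : (u^2*x0^2 + u^2*x1^2 + t^2*x2^2)/(x0^2+x1^2+x2^2)
          + (u^2*y0^2 + u^2*y1^2 + t^2*y2^2)/(y0^2+y1^2+y2^2) ≤ m^2 := by
        have eA : u^2*x0^2 + u^2*x1^2 + t^2*x2^2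
            = u^2*(x0^2+x1^2+x2^2) + (t^2-u^2)*(x2^2) := by ring
        have eB : u^2*y0^2 + u^2*y1^2 + t^2*y2^2
            = u^2*(y0^2+y1^2+y2^2) + (t^2-u^2)*(y2^2) := by ring
        rw [eA, eB]
        exact div_bound_abs u t m _ _ _ _ hXp hYp hm2 ht2u2 bessel
      set p := Real.sqrt (x0^2+x1^2+x2^2) with hp
      set q := Real.sqrt (y0^2+y1^2+y2^2) with hq
      set g := Real.sqrt ((u^2*x0^2 + u^2*x1^2 + t^2*x2^2)/(x0^2+x1^2+x2^2)) with hg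
      set h := Real.sqrt ((u^2*y0^2 + u^2*y1^2 + t^2*y2^2)/(y0^2+y1^2+y2^2)) with hh
      have hp2 : p^2 = x0^2+x1^2+x2^2 := Real.sq_sqrt hXnn
      have hq2 : q^2 = y0^2+y1^2+y2^2 := Real.sq_sqrt hYnn
      have hg2 : g^2 = (u^2*x0^2 + u^2*x1^2 + t^2*x2^2)/(x0^2+x1^2+x2^2) :=
        Real.sq_sqrt (by positivity)
      have hh2 : h^2 = (u^2*y0^2 + u^2*y1^2 + t^2*y2^2)/(y0^2+y1^2+y2^2) :=
        Real.sq_sqrt (by positivity)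
      have hsA : Real.sqrt (u^2*x0^2 + u^2*x1^2 + t^2*x2^2) = p * g := by
        rw [hp, hg, ← Real.sqrt_mul hXnn, mul_div_cancel₀ _ hX]
      have hsB : Real.sqrt (u^2*y0^2 + u^2*y1^2 + t^2*y2^2) = q * h := by
        rw [hq, hh, ← Real.sqrt_mul hYnn, mul_div_cancel₀ _ hY]
      rw [hsA, hsB]
      have e4 : p^2 + q^2 = 4 := by rw [hp2, hq2]; linarith
      have e5 : g^2 + h^2 ≤ m^2 := by rw [hg2, hh2]; exact hdiv
      exact cauchy_combine p q g h m e4 e5 (Real.sqrt_nonneg _) (Real.sqrt_nonneg _)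
        (Real.sqrt_nonneg _) (Real.sqrt_nonneg _) hm

lemma chsh_ub (u t m : ℝ) (hu : 0 ≤ u) (hut : u ≤ t) (hm : 0 ≤ m) (hm2 : m^2 = t^2 + u^2)
    (a b c d : Fin 3 → ℝ) (ha : unitVec a) (hb : unitVec b) (hc : unitVec c) (hd : unitVec d) :
    1/2 * ((a 0 * (c 0 + d 0) + b 0 * (c 0 - d 0)) * u
         - (a 1 * (c 1 + d 1) + b 1 * (c 1 - d 1)) * u
         + (a 2 * (c 2 + d 2) + b 2 * (c 2 - d 2)) * t) ≤ m := by
  simp only [unitVec, Fin.sum_univ_three] at ha hb hc hd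
  have horth : (c 0 + d 0)*(c 0 - d 0) + (c 1 + d 1)*(c 1 - d 1) + (c 2 + d 2)*(c 2 - d 2) = 0 := by
    linear_combination hc - hd
  have hsum : ((c 0 + d 0)^2+(c 1 + d 1)^2+(c 2 + d 2)^2)
      + ((c 0 - d 0)^2+(c 1 - d 1)^2+(c 2 - d 2)^2) = 4 := by
    linear_combination 2*hc + 2*hd
  have s1 : a 0*(u*(c 0 + d 0)) + a 1*(-(u*(c 1 + d 1))) + a 2*(t*(c 2 + d 2)) ≤
      Real.sqrt (u^2*(c 0 + d 0)^2 + u^2*(c 1 + d 1)^2 + t^2*(c 2 + d 2)^2) := by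
    have hcs := cs3 (a 0) (a 1) (a 2) (u*(c 0 + d 0)) (-(u*(c 1 + d 1))) (t*(c 2 + d 2)) ha
    have e : (u*(c 0 + d 0))^2 + (-(u*(c 1 + d 1)))^2 + (t*(c 2 + d 2))^2
        = u^2*(c 0 + d 0)^2 + u^2*(c 1 + d 1)^2 + t^2*(c 2 + d 2)^2 := by ring
    rwa [e] at hcs
  have s2 : b 0*(u*(c 0 - d 0)) + b 1*(-(u*(c 1 - d 1))) + b 2*(t*(c 2 - d 2)) ≤
      Real.sqrt (u^2*(c 0 - d 0)^2 + u^2*(c 1 - d 1)^2 + t^2*(c 2 - d 2)^2) := by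
    have hcs := cs3 (b 0) (b 1) (b 2) (u*(c 0 - d 0)) (-(u*(c 1 - d 1))) (t*(c 2 - d 2)) hb
    have e : (u*(c 0 - d 0))^2 + (-(u*(c 1 - d 1)))^2 + (t*(c 2 - d 2))^2
        = u^2*(c 0 - d 0)^2 + u^2*(c 1 - d 1)^2 + t^2*(c 2 - d 2)^2 := by ring
    rwa [e] at hcs
  have key := sum_sqrt_le u t m (c 0 + d 0) (c 1 + d 1) (c 2 + d 2)
    (c 0 - d 0) (c 1 - d 1) (c 2 - d 2) hu hut hm hm2 horth hsum
  have hL : (1/2 * ((a 0 * (c 0 + d 0) + b 0 * (c 0 - d 0)) * u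
         - (a 1 * (c 1 + d 1) + b 1 * (c 1 - d 1)) * u
         + (a 2 * (c 2 + d 2) + b 2 * (c 2 - d 2)) * t)) * 2
      = (a 0*(u*(c 0 + d 0)) + a 1*(-(u*(c 1 + d 1))) + a 2*(t*(c 2 + d 2)))
      + (b 0*(u*(c 0 - d 0)) + b 1*(-(u*(c 1 - d 1))) + b 2*(t*(c 2 - d 2))) := by ring
  linarith

/-- for each C ∈ [0,1] there is a two-qubit density matrix with
concurrence C whose maximal CHSH expectation is exactly max[1, √2·C]. -/
theorem chsh_lower_bound_attained (Cc : ℝ) (h0 : 0 ≤ Cc) (h1 : Cc ≤ 1) :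
    ∃ ρ : Matrix (Fin 2 × Fin 2) (Fin 2 × Fin 2) ℂ, ρ.PosSemidef ∧ ρ.trace = 1 ∧
      (∃ l : Fin 4 → ℝ, Antitone l ∧ (∀ i, 0 ≤ l i) ∧
        (ρ * (pauli 1 ⊗ₖ pauli 1) * ρᵀ * (pauli 1 ⊗ₖ pauli 1)).charpoly
          = (∏ i : Fin 4, (Polynomial.X - Polynomial.C (l i : ℂ))) ∧
        max 0 (Real.sqrt (l 0) - Real.sqrt (l 1) - Real.sqrt (l 2) - Real.sqrt (l 3)) = Cc) ∧
      IsLUB (betaSet ρ) (max 1 (Real.sqrt 2 * Cc)) := by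
  set t := max Cc (Real.sqrt (1 - Cc^2)) with htdef
  set m := max 1 (Real.sqrt 2 * Cc) with hmdef
  have hut : Cc ≤ t := le_max_left _ _
  have ht0 : 0 ≤ t := le_trans h0 hut
  have ht1 : t ≤ 1 := by
    apply max_le h1
    calc Real.sqrt (1 - Cc^2) ≤ Real.sqrt 1 := Real.sqrt_le_sqrt (by nlinarith)
    _ = 1 := Real.sqrt_one
  have hm1 : 1 ≤ m := le_max_left _ _
  have hm0 : 0 ≤ m := le_trans zero_le_one hm1
  have hs2 := Real.sq_sqrt (by norm_num : (0:ℝ) ≤ 2)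
  have hs2n := Real.sqrt_nonneg 2
  have hm2 : m^2 = t^2 + Cc^2 := by
    rcases le_or_gt (Cc^2*2) 1 with hq | hq
    · have hle : Cc ≤ Real.sqrt (1 - Cc^2) := by
        nth_rewrite 1 [show Cc = Real.sqrt (Cc^2) from (Real.sqrt_sq h0).symm]
        exact Real.sqrt_le_sqrt (by linarith)
      have htt : t = Real.sqrt (1 - Cc^2) := max_eq_right hle
      have ht2 : t^2 = 1 - Cc^2 := by rw [htt]; exact Real.sq_sqrt (by linarith)
      have hle2 : Real.sqrt 2 * Cc ≤ 1 := by
        nlinarith [mul_nonneg hs2n h0]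
      have hmm : m = 1 := max_eq_left hle2
      rw [hmm, ht2]; ring
    · have hle : Real.sqrt (1 - Cc^2) ≤ Cc := by
        have hh : Real.sqrt (1 - Cc^2) ≤ Real.sqrt (Cc^2) := Real.sqrt_le_sqrt (by linarith)
        rwa [Real.sqrt_sq h0] at hh
      have htt : t = Cc := max_eq_left hle
      have hle2 : 1 ≤ Real.sqrt 2 * Cc := by
        nlinarith [mul_nonneg hs2n h0]
      have hmm : m = Real.sqrt 2 * Cc := max_eq_right hle2
      rw [hmm, htt, mul_pow, hs2]; ring
  refine ⟨rhoM ((1+t)/4) (Cc/2) ((1-t)/2),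
    rhoM_posSemidef _ _ _ (by linarith) (by linarith) (by linarith), ?_, ?_, ?_⟩
  · rw [rhoM_trace]
    have e : (2*((1+t)/4) + (1-t)/2 : ℝ) = 1 := by ring
    rw [e, Complex.ofReal_one]
  · refine ⟨![((1+t)/4 + Cc/2)^2, ((1+t)/4 - Cc/2)^2, 0, 0], ?_, ?_, ?_, ?_⟩
    · intro i j hij
      have hBA : Cc/2 ≤ (1+t)/4 := by linarith
      fin_cases i <;> fin_cases j <;>
        simp_all [Matrix.vecHead, Matrix.vecTail] <;>
        first
        | rfl
        | (exact absurd hij (by decide))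
        | positivity
        | nlinarith [h0, hBA]
    · intro i
      fin_cases i <;> simp [Matrix.vecHead, Matrix.vecTail] <;> positivity
    · rw [charpoly_rho, Fin.prod_univ_four]
      norm_num [Matrix.vecHead, Matrix.vecTail]
      simp [Matrix.cons_val]
    · have e0 : Real.sqrt (((1+t)/4 + Cc/2)^2) = (1+t)/4 + Cc/2 :=
        Real.sqrt_sq (by linarith)
      have e1 : Real.sqrt (((1+t)/4 - Cc/2)^2) = (1+t)/4 - Cc/2 :=
        Real.sqrt_sq (by linarith)
      simp only [Matrix.cons_val_zero, Matrix.cons_val_one, Matrix.head_cons,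
        Matrix.cons_val_two, Matrix.cons_val_three, Matrix.vecHead, Matrix.vecTail,
        Matrix.cons_val_succ, Function.comp, e0, e1, Real.sqrt_zero]
      have e2 : ((1+t)/4 + Cc/2) - ((1+t)/4 - Cc/2) - 0 - 0 = Cc := by ring
      rw [e2]
      exact max_eq_right h0
  · constructor
    · rintro x ⟨a, b, c, d, ha, hb, hc, hd, rfl⟩
      rw [trace_bell]
      have key := chsh_ub Cc t m h0 hut hm0 hm2 a b c d ha hb hc hd
      have e : 1/2 * ((a 0 * (c 0 + d 0) + b 0 * (c 0 - d 0)) * (2*(Cc/2))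
           - (a 1 * (c 1 + d 1) + b 1 * (c 1 - d 1)) * (2*(Cc/2))
           + (a 2 * (c 2 + d 2) + b 2 * (c 2 - d 2)) * (2*((1+t)/4) - (1-t)/2))
         = 1/2 * ((a 0 * (c 0 + d 0) + b 0 * (c 0 - d 0)) * Cc
           - (a 1 * (c 1 + d 1) + b 1 * (c 1 - d 1)) * Cc
           + (a 2 * (c 2 + d 2) + b 2 * (c 2 - d 2)) * t) := by ring
      rw [e]
      exact key
    · intro w hw
      apply hw
      have hmne : m ≠ 0 := by linarith
      refine ⟨![0,0,1], ![1,0,0], ![Cc/m, 0, t/m], ![-(Cc/m), 0, t/m], ?_, ?_, ?_, ?_, ?_⟩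
      · simp [unitVec, Fin.sum_univ_three]
      · simp [unitVec, Fin.sum_univ_three]
      · simp only [unitVec, Fin.sum_univ_three, Matrix.cons_val_zero, Matrix.cons_val_one,
          Matrix.head_cons, Matrix.cons_val_two, Matrix.vecHead, Matrix.vecTail,
          Function.comp_apply, Matrix.cons_val_succ]
        field_simp
        linarith [hm2]
      · simp only [unitVec, Fin.sum_univ_three, Matrix.cons_val_zero, Matrix.cons_val_one,
          Matrix.head_cons, Matrix.cons_val_two, Matrix.vecHead, Matrix.vecTail,
          Function.comp_apply, Matrix.cons_val_succ]
        field_simp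
        linarith [hm2]
      · rw [trace_bell]
        simp only [Matrix.cons_val_zero, Matrix.cons_val_one, Matrix.head_cons,
          Matrix.cons_val_two, Matrix.vecHead, Matrix.vecTail,
          Function.comp_apply, Matrix.cons_val_succ]
        field_simp
        first
        | linear_combination 2 * m * hm2
        | linear_combination 14 * m * hm2
        | linear_combination 4 * m * hm2
        | linear_combination m * hm2
        | linear_combination 7 * m * hm2
        | linear_combination (m/2) * hm2
        | linear_combination 16 * m * hm2
        | linear_combination 8 * m * hm2
        | linear_combination 32 * m * hm2
        | linear_combination 6 * m * hm2
        | linear_combination 3 * m * hm2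
        | linear_combination 12 * m * hm2
        | linear_combination 16 * hm2
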